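/- arXiv:2410.17515 — 5 statements merged into one kernel-verified Lean document; each statement's English description precedes it below -/
import Mathlib

section
/- Let d ≥ 1 and 0 < α ≤ 1. Then ∑_{m≥0} √(2eπ(2m+d+1)) · α^{d+2m} / (2m)!! ≤ 3·√(2eπ) · √(d+1) · α^d, where (2m)!! = 2^m · m! is the double factorial of the even number 2m. -/
lemma tsum_inv_factorial_eq : ∑' m : ℕ, (1:ℝ) / m.factorial = Real.exp 1 := by
  rw [Real.exp_eq_exp_ℝ, NormedSpace.exp_eq_tsum_div]
  simp

lemma term_le (d : ℕ) (α : ℝ) (hα0 : 0 < α) (hα1 : α ≤ 1) (m : ℕ) :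
    Real.sqrt (2 * Real.exp 1 * Real.pi * (2 * m + d + 1)) * α ^ (d + 2 * m) /
        (2 ^ m * (Nat.factorial m : ℝ)) ≤
      Real.sqrt (2 * Real.exp 1 * Real.pi) * Real.sqrt (d + 1) * α ^ d *
        (1 / m.factorial) := by
  have hfac : (0:ℝ) < m.factorial := by positivity
  have h2eπ : (0:ℝ) ≤ 2 * Real.exp 1 * Real.pi := by positivity
  have hsq : Real.sqrt (2 * Real.exp 1 * Real.pi * (2 * m + d + 1)) ≤
      Real.sqrt (2 * Real.exp 1 * Real.pi) * Real.sqrt (d + 1) * 2 ^ m := by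
    have h1 : (2 * m + d + 1 : ℝ) ≤ (d + 1) * 4 ^ m := by
      have h4 : (2 * m + 1 : ℝ) ≤ 4 ^ m := by
        clear hfac h2eπ
        induction m with
        | zero => norm_num
        | succ n ih =>
          have : (4:ℝ) ^ n ≥ 1 := one_le_pow₀ (by norm_num)
          push_cast at ih ⊢
          rw [pow_succ]; nlinarith
      have hd0 : (0:ℝ) ≤ d := by positivity
      nlinarith [pow_nonneg (by norm_num : (0:ℝ) ≤ 4) m]
    calc Real.sqrt (2 * Real.exp 1 * Real.pi * (2 * m + d + 1))
        ≤ Real.sqrt (2 * Real.exp 1 * Real.pi * ((d + 1) * 4 ^ m)) := by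
          apply Real.sqrt_le_sqrt; nlinarith
      _ = Real.sqrt (2 * Real.exp 1 * Real.pi) * Real.sqrt (d + 1) * 2 ^ m := by
          rw [Real.sqrt_mul h2eπ,
            Real.sqrt_mul (show (0:ℝ) ≤ (d:ℝ)+1 by positivity),
            show (4:ℝ) ^ m = ((2:ℝ) ^ m) ^ 2 by rw [← pow_mul, mul_comm m 2, pow_mul]; norm_num,
            Real.sqrt_sq (by positivity : (0:ℝ) ≤ (2:ℝ)^m)]
          ring
  have hαpow : α ^ (d + 2 * m) ≤ α ^ d :=
    pow_le_pow_of_le_one hα0.le hα1 (Nat.le_add_right _ _)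
  have h0 : (0:ℝ) < 2 ^ m * m.factorial := by positivity
  rw [div_le_iff₀ h0]
  have key : Real.sqrt (2 * Real.exp 1 * Real.pi * (2 * m + d + 1)) * α ^ (d + 2 * m) ≤
      (Real.sqrt (2 * Real.exp 1 * Real.pi) * Real.sqrt (d + 1) * 2 ^ m) * α ^ d := by
    apply mul_le_mul hsq hαpow (by positivity) (by positivity)
  calc Real.sqrt (2 * Real.exp 1 * Real.pi * (2 * m + d + 1)) * α ^ (d + 2 * m)
      ≤ (Real.sqrt (2 * Real.exp 1 * Real.pi) * Real.sqrt (d + 1) * 2 ^ m) * α ^ d := key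
    _ = Real.sqrt (2 * Real.exp 1 * Real.pi) * Real.sqrt (d + 1) * α ^ d *
        (1 / m.factorial) * (2 ^ m * m.factorial) := by
        field_simp

/-- `∑_{m≥0} √(2eπ(2m+d+1)) α^{d+2m} / (2m)!! ≤ 3 √(2eπ) √(d+1) α^d`
for `d ≥ 1` and `0 < α ≤ 1`, where `(2m)!! = 2^m m!`. -/
theorem doubleFactorial_series_bound (d : ℕ) (hd : 1 ≤ d) (α : ℝ)
    (hα0 : 0 < α) (hα1 : α ≤ 1) :
    (∑' m : ℕ, Real.sqrt (2 * Real.exp 1 * Real.pi * (2 * m + d + 1)) * α ^ (d + 2 * m) /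
        (2 ^ m * (Nat.factorial m : ℝ))) ≤
      3 * Real.sqrt (2 * Real.exp 1 * Real.pi) * Real.sqrt (d + 1) * α ^ d := by
  set C := Real.sqrt (2 * Real.exp 1 * Real.pi) * Real.sqrt (d + 1) * α ^ d with hC
  have hC0 : 0 ≤ C := by positivity
  have hsum : Summable (fun m : ℕ => C * (1 / m.factorial : ℝ)) := by
    simpa using (Real.summable_pow_div_factorial 1).mul_left C
  have h1 : (∑' m : ℕ, Real.sqrt (2 * Real.exp 1 * Real.pi * (2 * m + d + 1)) *
      α ^ (d + 2 * m) / (2 ^ m * (Nat.factorial m : ℝ))) ≤ ∑' m : ℕ, C * (1 / m.factorial) := by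
    apply Summable.tsum_le_tsum (fun m => term_le d α hα0 hα1 m) _ hsum
    · apply hsum.of_nonneg_of_le (fun m => by positivity) (fun m => term_le d α hα0 hα1 m)
  have h2 : (∑' m : ℕ, C * (1 / m.factorial : ℝ)) = C * Real.exp 1 := by
    rw [tsum_mul_left, tsum_inv_factorial_eq]
  have h3 : C * Real.exp 1 ≤ C * 3 :=
    mul_le_mul_of_nonneg_left (Real.exp_one_lt_d9.le.trans (by norm_num)) hC0
  calc _ ≤ ∑' m : ℕ, C * (1 / m.factorial : ℝ) := h1
    _ = C * Real.exp 1 := h2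
    _ ≤ C * 3 := h3
    _ = 3 * Real.sqrt (2 * Real.exp 1 * Real.pi) * Real.sqrt (d + 1) * α ^ d := by rw [hC]; ring
end

section
/- Let n, L be positive integers with L ∈ {2, 3}. Consider a cycle with 2L vertices alternating between 'n-vertices' and 'p-vertices', where each n-vertex is assigned a label in [n], each p-vertex is assigned a d-tuple of distinct labels in [p] for some d, such that: (i) adjacent n-vertices (those separated by one p-vertex along the cycle) have distinct labels; (iii) for each pair (i,j) of an n-label and a p-label, the number of edges of the cycle whose n-endpoint is labelled i and whose p-endpoint's tuple contains j is either 0 or at least 2. Then all L n-labels are pairwise distinct and all L p-vertex tuples are equal as sets. -/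
/-- The number of edges of the `L`-cycle whose `n`-endpoint is labelled `i` and whose
`p`-endpoint's tuple contains `j`: the `p`-vertex `s` is adjacent to the `n`-vertices
`s` and `s+1` (cyclically). -/
def incCount (L n p : ℕ) [NeZero L] (nlabel : Fin L → Fin n)
    (ptuple : Fin L → Finset (Fin p)) (i : Fin n) (j : Fin p) : ℕ :=
  (Finset.univ.filter fun s : Fin L => j ∈ ptuple s ∧ nlabel s = i).card +
  (Finset.univ.filter fun s : Fin L => j ∈ ptuple s ∧ nlabel (s + 1) = i).card

lemma key_step {L n p : ℕ} [NeZero L] (nlabel : Fin L → Fin n)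
    (hinj : Function.Injective nlabel) (ptuple : Fin L → Finset (Fin p))
    (hpair : ∀ (i : Fin n) (j : Fin p),
      incCount L n p nlabel ptuple i j = 0 ∨ 2 ≤ incCount L n p nlabel ptuple i j)
    (j : Fin p) (v : Fin L) : (j ∈ ptuple (v + 1) ↔ j ∈ ptuple v) := by
  have h1 : (Finset.univ.filter fun s : Fin L =>
      j ∈ ptuple s ∧ nlabel s = nlabel (v + 1)) =
      if j ∈ ptuple (v + 1) then {v + 1} else ∅ := by
    ext s
    constructor
    · intro hs
      simp only [Finset.mem_filter, Finset.mem_univ, true_and] at hs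
      obtain ⟨hj, he⟩ := hs
      have : s = v + 1 := hinj he
      subst this
      simp [hj]
    · intro hs
      split_ifs at hs with h
      · simp only [Finset.mem_singleton] at hs
        subst hs
        simp [h]
      · simp at hs
  have h2 : (Finset.univ.filter fun s : Fin L =>
      j ∈ ptuple s ∧ nlabel (s + 1) = nlabel (v + 1)) =
      if j ∈ ptuple v then {v} else ∅ := by
    ext s
    constructor
    · intro hs
      simp only [Finset.mem_filter, Finset.mem_univ, true_and] at hs
      obtain ⟨hj, he⟩ := hs
      have : s = v := by
        have := hinj he
        exact add_right_cancel this
      subst this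
      simp [hj]
    · intro hs
      split_ifs at hs with h
      · simp only [Finset.mem_singleton] at hs
        subst hs
        simp [h]
      · simp at hs
  have hc := hpair (nlabel (v + 1)) j
  unfold incCount at hc
  rw [h1, h2] at hc
  by_cases ha : j ∈ ptuple (v + 1) <;> by_cases hb : j ∈ ptuple v <;>
    simp [ha, hb] at hc ⊢

/-- For `L ∈ {2,3}`, in any multi-labelling of the `L`-graph satisfying the adjacency and
pairing conditions, all `n`-labels are pairwise distinct and all `p`-vertex tuples are
equal as sets. -/
theorem lGraph_two_three (L n p : ℕ) [NeZero L] (hL : L = 2 ∨ L = 3)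
    (nlabel : Fin L → Fin n) (ptuple : Fin L → Finset (Fin p))
    (hadj : ∀ s : Fin L, nlabel s ≠ nlabel (s + 1))
    (hpair : ∀ (i : Fin n) (j : Fin p),
      incCount L n p nlabel ptuple i j = 0 ∨ 2 ≤ incCount L n p nlabel ptuple i j) :
    Function.Injective nlabel ∧ ∀ s t : Fin L, ptuple s = ptuple t := by
  rcases hL with rfl | rfl
  · have h0 := hadj 0
    have hinj : Function.Injective nlabel := by
      intro a b h
      fin_cases a <;> fin_cases b <;> first | rfl | simp_all
    refine ⟨hinj, ?_⟩
    have hk := key_step nlabel hinj ptuple hpair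
    have e01 : ptuple 0 = ptuple 1 := by
      ext j
      have := hk j 0
      simpa using this.symm
    intro s t
    fin_cases s <;> fin_cases t <;> simp [e01]
  · have h0 := hadj 0
    have h1 := hadj 1
    have h2 := hadj 2
    have hinj : Function.Injective nlabel := by
      intro a b h
      fin_cases a <;> fin_cases b <;>
        first | rfl | simp_all
    refine ⟨hinj, ?_⟩
    have hk := key_step nlabel hinj ptuple hpair
    have e01 : ptuple 0 = ptuple 1 := by
      ext j
      have := hk j 0
      simpa using this.symm
    have e12 : ptuple 1 = ptuple 2 := by
      ext j
      have := hk j 1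
      simpa using this.symm
    intro s t
    fin_cases s <;> fin_cases t <;> simp [e01, e12, e01.trans e12]
end

section
/- Let ℒ be a (p,n,L_1)-multi-labelling of an L-graph (L ≥ 2), with p-vertex tuple sizes d_1,…,d_L (each satisfying ℓ ≤ d_s ≤ L_1), r(ℒ) distinct n-labels and c(ℒ) distinct p-labels. Then the excess Δ(ℒ) := 1 + L/2 + (∑_{s=1}^L d_s)/(2ℓ) − r(ℒ) − c(ℒ)/ℓ is nonnegative. -/
namespace List

variable {γ δ : Type*}

theorem zip_rotate_rotate {l₁ : List γ} {l₂ : List δ} (h : l₁.length = l₂.length) (n : ℕ) :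
    (l₁.rotate n).zip (l₂.rotate n) = (l₁.zip l₂).rotate n := by
  apply ext_getElem
  · simp [h]
  · intro k _ _
    simp [getElem_rotate, h]

theorem exists_rotate_eq_cons {l : List γ} {e : γ} (he : e ∈ l) : ∃ k t, l.rotate k = e :: t := by
  obtain ⟨s, t, rfl⟩ := mem_iff_append.mp he
  exact ⟨s.length, t ++ s, rotate_append_length_eq s (e :: t)⟩

theorem exists_rotate_eq_cons_cons {l : List γ} {e : γ} (he : e ∈ l) (hl : 2 ≤ l.length) :
    ∃ k a t, l.rotate k = a :: e :: t := by
  obtain ⟨k, t, hk⟩ := exists_rotate_eq_cons he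
  obtain rfl | ⟨t, a, rfl⟩ := t.eq_nil_or_concat'
  · rw [← length_rotate l k, hk] at hl
    simp at hl
  · refine ⟨k + (t.length + 1), a, t, ?_⟩
    rw [← rotate_rotate, hk]
    exact rotate_append_length_eq (e :: t) [a]

theorem mul_card_toFinset_le_length [DecidableEq γ] {l : List γ} {k : ℕ}
    (h : ∀ a ∈ l, k ≤ l.count a) : k * l.toFinset.card ≤ l.length :=
  calc k * l.toFinset.card = ∑ _a ∈ l.toFinset, k := by rw [Finset.sum_const, smul_eq_mul, mul_comm]
    _ ≤ ∑ a ∈ l.toFinset, l.count a := Finset.sum_le_sum fun a ha => h a (mem_toFinset.mp ha)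
    _ = l.length := sum_toFinset_count_eq_length l

theorem sum_countP_mem_eq_sum_card [DecidableEq γ] {U : Finset γ} {l : List (Finset γ)}
    (h : ∀ s ∈ l, s ⊆ U) : ∑ j ∈ U, l.countP (j ∈ ·) = (l.map Finset.card).sum := by
  induction l with
  | nil => simp
  | cons s t ih =>
    simp only [countP_cons, Finset.sum_add_distrib, map_cons, sum_cons]
    rw [ih fun s' hs' => h s' (mem_cons_of_mem s hs'), add_comm]
    simp [Finset.inter_eq_right.2 (h s mem_cons_self)]

theorem countP_finRange {n : ℕ} (P : Fin n → Prop) [DecidablePred P] :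
    (finRange n).countP (fun s => decide (P s)) = (Finset.univ.filter P).card := by
  rw [countP_eq_length_filter, Fin.univ_def]
  rfl

end List

namespace CyclicLabelling

variable {α β : Type*}

/-- Entry `k` of `l` holds the label of the `k`-th n-vertex and the tuple of the `k`-th p-vertex,
whose neighbours are the n-vertices `k` and `k + 1` (indices mod `l.length`); `pVertices l` attaches
to entry `k` the label of n-vertex `k + 1`. -/
def pVertices (l : List (α × Finset β)) : List ((α × Finset β) × α) :=
  l.zip ((l.map Prod.fst).rotate 1)

def sizeSum (g : ℕ) (l : List (α × Finset β)) : ℕ := (l.map fun e => max e.2.card g).sum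

variable {a b r : α × Finset β} {l t : List (α × Finset β)} {i : α} {j : β} {g : ℕ}

theorem pVertices_cons (a : α × Finset β) (t : List (α × Finset β)) :
    pVertices (a :: t) = (a :: t).zip (t.map Prod.fst ++ [a.1]) := by
  simp [pVertices, List.rotate_cons_succ]

theorem pVertices_rotate (l : List (α × Finset β)) (n : ℕ) :
    pVertices (l.rotate n) = (pVertices l).rotate n := by
  rw [pVertices, pVertices, List.map_rotate, List.rotate_rotate, add_comm, ← List.rotate_rotate,
    List.zip_rotate_rotate (by simp)]

theorem pVertices_ofFn {L : ℕ} [NeZero L] (nlabel : Fin L → α) (ptuple : Fin L → Finset β) :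
    pVertices (List.ofFn fun s => (nlabel s, ptuple s))
      = List.ofFn fun s => ((nlabel s, ptuple s), nlabel (s + 1)) := by
  apply List.ext_getElem
  · simp [pVertices]
  · intro k _ _
    simp only [pVertices, List.map_ofFn, List.getElem_zip, List.getElem_ofFn, List.getElem_rotate,
      List.length_ofFn, Function.comp_apply, Prod.mk.injEq, true_and]
    congr 1
    ext
    simp [Fin.val_add]

@[simp] theorem sizeSum_cons : sizeSum g (a :: l) = max a.2.card g + sizeSum g l := by
  simp [sizeSum]

theorem sizeSum_ofFn {L : ℕ} (nlabel : Fin L → α) (ptuple : Fin L → Finset β) (g : ℕ) :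
    sizeSum g (List.ofFn fun s => (nlabel s, ptuple s)) = ∑ s, max (ptuple s).card g := by
  simp [sizeSum, List.sum_ofFn]

section Labels

variable [DecidableEq α]

def labels (l : List (α × Finset β)) : Finset α := (l.map Prod.fst).toFinset

@[simp] theorem labels_cons : labels (a :: l) = insert a.1 (labels l) := by simp [labels]

theorem mem_labels : i ∈ labels l ↔ ∃ e ∈ l, e.1 = i := by simp [labels]

theorem labels_ofFn {L : ℕ} (nlabel : Fin L → α) (ptuple : Fin L → Finset β) :
    labels (List.ofFn fun s => (nlabel s, ptuple s)) = Finset.univ.image nlabel := by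
  ext; simp [labels]

end Labels

section EraseTuples

variable [DecidableEq β]

def eraseTuples (J : Finset β) (l : List (α × Finset β)) : List (α × Finset β) :=
  l.map fun e => (e.1, e.2 \ J)

theorem pVertices_eraseTuples (J : Finset β) (l : List (α × Finset β)) :
    pVertices (eraseTuples J l) = (pVertices l).map (Prod.map (fun e => (e.1, e.2 \ J)) id) := by
  simp [pVertices, eraseTuples, List.map_map, Function.comp_def, List.zip_map_left]

theorem sizeSum_eraseTuples_le (J : Finset β) (l : List (α × Finset β)) :
    sizeSum g (eraseTuples J l) ≤ sizeSum g l := by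
  rw [sizeSum, sizeSum, eraseTuples, List.map_map]
  exact List.sum_le_sum fun e _ => max_le_max_right g (Finset.card_le_card Finset.sdiff_subset)

end EraseTuples

variable [DecidableEq α] [DecidableEq β]

def incidence (i : α) (j : β) (l : List (α × Finset β)) : ℕ :=
  l.countP (fun e => j ∈ e.2 ∧ e.1 = i) + (pVertices l).countP (fun v => j ∈ v.1.2 ∧ v.2 = i)

/-- Conditions (i) and (iii); the sizes of the tuples enter only through `sizeSum`. -/
structure IsMultiLabelling (l : List (α × Finset β)) : Prop where
  fst_ne : ∀ v ∈ pVertices l, v.1.1 ≠ v.2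
  incidence_ne_one : ∀ i j, incidence i j l ≠ 1

def tupleUnion (l : List (α × Finset β)) : Finset β := l.toFinset.biUnion Prod.snd

/-- `2ℓΔ ≥ 0` for `ℓ = g`, with each tuple size `d` replaced by `max d g`: tuples may shrink below
size `g` when labels are erased in the induction. -/
def ExcessNonneg (g : ℕ) (l : List (α × Finset β)) : Prop :=
  2 * g * (labels l).card + 2 * (tupleUnion l).card ≤ sizeSum g l + g * (l.length + 2)

theorem incidence_rotate (n : ℕ) : incidence i j (l.rotate n) = incidence i j l := by
  rw [incidence, incidence, pVertices_rotate, (l.rotate_perm n).countP_eq,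
    ((pVertices l).rotate_perm n).countP_eq]

theorem IsMultiLabelling.rotate (h : IsMultiLabelling l) (n : ℕ) :
    IsMultiLabelling (l.rotate n) where
  fst_ne v hv := h.fst_ne v (by rwa [pVertices_rotate, List.mem_rotate] at hv)
  incidence_ne_one i j := by rw [incidence_rotate]; exact h.incidence_ne_one i j

theorem excessNonneg_rotate_iff (n : ℕ) : ExcessNonneg g (l.rotate n) ↔ ExcessNonneg g l := by
  rw [ExcessNonneg, ExcessNonneg, labels, labels, tupleUnion, tupleUnion, sizeSum, sizeSum,
    List.length_rotate, List.map_rotate, List.map_rotate,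
    List.toFinset_eq_of_perm _ _ (List.rotate_perm _ n),
    List.toFinset_eq_of_perm _ _ (List.rotate_perm _ n), (List.rotate_perm _ n).sum_eq]

@[simp] theorem tupleUnion_cons : tupleUnion (a :: l) = a.2 ∪ tupleUnion l := by
  simp [tupleUnion, Finset.biUnion_insert]

theorem mem_tupleUnion : j ∈ tupleUnion l ↔ ∃ e ∈ l, j ∈ e.2 := by simp [tupleUnion]

theorem incidence_cons_cons_of_snd_eq (t : List (α × Finset β)) (hab : a.2 = b.2) (i : α) (j : β) :
    incidence i j (a :: b :: t) = incidence i j (a :: t) + if j ∈ b.2 ∧ b.1 = i then 2 else 0 := by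
  obtain ⟨x, T, hT⟩ := List.exists_cons_of_ne_nil (by simp : t.map Prod.fst ++ [a.1] ≠ [])
  simp only [incidence, pVertices_cons, List.map_cons, List.cons_append, hT, List.zip_cons_cons,
    List.countP_cons, hab]
  split_ifs <;> simp_all <;> omega

theorem incidence_cons_cons_of_fst_eq (t : List (α × Finset β)) (hab : a.1 = b.1) (i : α) (j : β) :
    incidence i j (a :: b :: t) = incidence i j (b :: t) + if j ∈ a.2 ∧ a.1 = i then 2 else 0 := by
  simp only [incidence, pVertices_cons, List.map_cons, List.cons_append, List.zip_cons_cons,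
    List.countP_cons, hab]
  split_ifs <;> simp_all <;> omega

theorem incidence_eq_zero (h : i ∉ labels l) (j : β) : incidence i j l = 0 := by
  rw [mem_labels] at h
  push Not at h
  simp only [incidence, Nat.add_eq_zero_iff, List.countP_eq_zero, decide_eq_true_eq, not_and]
  refine ⟨fun e he _ => h e he, fun v hv _ => ?_⟩
  obtain ⟨e, he, hev⟩ := List.mem_map.mp (List.mem_rotate.mp (List.of_mem_zip hv).2)
  exact hev ▸ h e he

theorem incidence_cons_cons_of_notMem (hb : b.1 ∉ labels (a :: t)) (j : β) :
    incidence b.1 j (a :: b :: t) = (if j ∈ a.2 then 1 else 0) + if j ∈ b.2 then 1 else 0 := by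
  simp only [labels_cons, Finset.mem_insert, mem_labels, not_or, not_exists, not_and] at hb
  have hT : ∀ x ∈ t.map Prod.fst ++ [a.1], x ≠ b.1 := by
    simp only [List.mem_append, List.mem_map, List.mem_singleton]
    rintro x (⟨e, he, rfl⟩ | rfl)
    exacts [hb.2 e he, fun h => hb.1 h.symm]
  have ht : t.countP (fun e => j ∈ e.2 ∧ e.1 = b.1) = 0 :=
    List.countP_eq_zero.2 fun e he => by simp [hb.2 e he]
  have hz : ((b :: t).zip (t.map Prod.fst ++ [a.1])).countP (fun v => j ∈ v.1.2 ∧ v.2 = b.1) = 0 :=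
    List.countP_eq_zero.2 fun v hv => by simp [hT v.2 (List.of_mem_zip hv).2]
  simp only [incidence, pVertices_cons, List.map_cons, List.cons_append, List.zip_cons_cons,
    List.countP_cons, ht, hz]
  simp [Ne.symm hb.1, add_comm]

theorem IsMultiLabelling.snd_eq (h : IsMultiLabelling (a :: b :: t)) (hb : b.1 ∉ labels (a :: t)) :
    a.2 = b.2 := by
  ext j
  have := h.incidence_ne_one b.1 j
  rw [incidence_cons_cons_of_notMem hb] at this
  by_cases ha : j ∈ a.2 <;> by_cases hb' : j ∈ b.2 <;> simp_all

theorem incidence_eraseTuples (J : Finset β) (l : List (α × Finset β)) (i : α) (j : β) :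
    incidence i j (eraseTuples J l) = if j ∈ J then 0 else incidence i j l := by
  rw [incidence, pVertices_eraseTuples, eraseTuples, List.countP_map, List.countP_map]
  split_ifs with hj
  · simp [hj]
  · simp [incidence, Function.comp_def, hj]

theorem labels_eraseTuples (J : Finset β) (l : List (α × Finset β)) :
    labels (eraseTuples J l) = labels l := by
  simp [labels, eraseTuples, Function.comp_def]

theorem tupleUnion_subset_union_eraseTuples (J : Finset β) (l : List (α × Finset β)) :
    tupleUnion l ⊆ tupleUnion (eraseTuples J l) ∪ J := by
  intro j hj
  obtain ⟨e, he, hje⟩ := mem_tupleUnion.mp hj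
  by_cases hjJ : j ∈ J
  · exact Finset.mem_union_right _ hjJ
  · exact Finset.mem_union_left _ (mem_tupleUnion.mpr
      ⟨(e.1, e.2 \ J), List.mem_map_of_mem he, Finset.mem_sdiff.mpr ⟨hje, hjJ⟩⟩)

theorem IsMultiLabelling.cons_of_cons_cons (h : IsMultiLabelling (a :: b :: r :: t))
    (hb : b.1 ∉ labels (a :: r :: t)) (har : a.1 ≠ r.1) : IsMultiLabelling (a :: r :: t) where
  fst_ne v hv := by
    simp only [pVertices_cons, List.map_cons, List.cons_append, List.zip_cons_cons,
      List.mem_cons] at hv h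
    rcases hv with rfl | hv
    exacts [har, h.fst_ne v (by simp [pVertices_cons, hv])]
  incidence_ne_one i j := by
    by_cases hi : b.1 = i
    · rw [← hi, incidence_eq_zero hb]
      exact zero_ne_one
    · have := h.incidence_ne_one i j
      rw [incidence_cons_cons_of_snd_eq _ (h.snd_eq hb)] at this
      simpa [hi] using this

theorem IsMultiLabelling.eraseTuples_of_cons_cons (h : IsMultiLabelling (a :: b :: r :: t))
    (hab : a.2 = b.2) (har : a.1 = r.1) : IsMultiLabelling (eraseTuples a.2 (r :: t)) where
  fst_ne v hv := by
    rw [pVertices_eraseTuples, List.mem_map] at hv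
    obtain ⟨w, hw, rfl⟩ := hv
    exact h.fst_ne w (by simp_all [pVertices_cons])
  incidence_ne_one i j := by
    rw [incidence_eraseTuples]
    split_ifs with hj
    · exact zero_ne_one
    · have := h.incidence_ne_one i j
      rw [incidence_cons_cons_of_snd_eq _ hab, incidence_cons_cons_of_fst_eq _ har] at this
      simpa [hj, ← hab] using this

theorem IsMultiLabelling.two_le_length (h : IsMultiLabelling l) (hl : l ≠ []) : 2 ≤ l.length := by
  match l, h with
  | [], _ => exact absurd rfl hl
  | [a], h => exact absurd rfl (h.fst_ne (a, a.1) (by simp [pVertices_cons]))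
  | _ :: _ :: _, _ => simp

theorem IsMultiLabelling.two_le_countP (h : IsMultiLabelling l) (hj : j ∈ tupleUnion l) :
    2 ≤ l.countP (fun e => j ∈ e.2) := by
  obtain ⟨e, he, hje⟩ := mem_tupleUnion.mp hj
  obtain ⟨k, t, hk⟩ := List.exists_rotate_eq_cons he
  have h' := hk ▸ h.rotate k
  rw [← (l.rotate_perm k).countP_eq, hk, List.countP_cons]
  by_contra hlt
  have ht : ∀ x ∈ t, j ∉ x.2 := by simpa [hje] using hlt
  obtain ⟨r, t, rfl⟩ := List.exists_cons_of_ne_nil (l := t) fun ht => by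
    subst ht
    exact absurd (h'.two_le_length (List.cons_ne_nil e [])) (by simp)
  have hne : e.1 ≠ r.1 := h'.fst_ne (e, r.1) (by simp [pVertices_cons])
  have hz₁ : (r :: t).countP (fun x => j ∈ x.2 ∧ x.1 = e.1) = 0 :=
    List.countP_eq_zero.2 fun x hx => by simp [ht x hx]
  have hz₂ : ((r :: t).zip (t.map Prod.fst ++ [e.1])).countP (fun v => j ∈ v.1.2 ∧ v.2 = e.1) = 0 :=
    List.countP_eq_zero.2 fun v hv => by simp [ht v.1 (List.of_mem_zip hv).1]
  apply h'.incidence_ne_one e.1 j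
  simp only [incidence, pVertices_cons, List.map_cons, List.cons_append, List.zip_cons_cons,
    List.countP_cons, hz₁, hz₂]
  simp [hje, hne.symm]

theorem sum_countP_eq_sum_card (l : List (α × Finset β)) :
    ∑ j ∈ tupleUnion l, l.countP (fun e => j ∈ e.2) = (l.map fun e => e.2.card).sum := by
  have := List.sum_countP_mem_eq_sum_card (U := tupleUnion l) (l := l.map Prod.snd)
    (fun s hs => by
      obtain ⟨e, he, rfl⟩ := List.mem_map.mp hs
      exact fun j hj => mem_tupleUnion.mpr ⟨e, he, hj⟩)
  simpa [List.countP_map, Function.comp_def] using this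

theorem IsMultiLabelling.two_mul_card_tupleUnion_le (h : IsMultiLabelling l) :
    2 * (tupleUnion l).card ≤ (l.map fun e => e.2.card).sum :=
  calc 2 * (tupleUnion l).card = ∑ _j ∈ tupleUnion l, 2 := by
        rw [Finset.sum_const, smul_eq_mul, mul_comm]
    _ ≤ ∑ j ∈ tupleUnion l, l.countP (fun e => j ∈ e.2) :=
        Finset.sum_le_sum fun _ hj => h.two_le_countP hj
    _ = _ := sum_countP_eq_sum_card l

theorem IsMultiLabelling.excessNonneg_of_forall_two_le_count (h : IsMultiLabelling l)
    (hl : ∀ x ∈ l.map Prod.fst, 2 ≤ (l.map Prod.fst).count x) : ExcessNonneg g l := by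
  have hr : 2 * (labels l).card ≤ l.length := by
    simpa [labels] using List.mul_card_toFinset_le_length hl
  have hc := h.two_mul_card_tupleUnion_le
  have hS : (l.map fun e => e.2.card).sum ≤ sizeSum g l :=
    List.sum_le_sum fun e _ => le_max_left _ _
  have := Nat.mul_le_mul_left g hr
  rw [ExcessNonneg]
  nlinarith

theorem excessNonneg_pair (hab : a.2 = b.2) : ExcessNonneg g [a, b] := by
  have hr : (labels [a, b]).card ≤ 2 := (List.toFinset_card_le _).trans (by simp)
  have hc : tupleUnion [a, b] = b.2 := by simp [tupleUnion, hab]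
  have hS : sizeSum g [a, b] = 2 * max b.2.card g := by simp [sizeSum, hab, two_mul]
  have := Nat.mul_le_mul_left (2 * g) hr
  rw [ExcessNonneg, hc, hS, List.length_cons, List.length_singleton]
  nlinarith [le_max_left b.2.card g, le_max_right b.2.card g]

theorem ExcessNonneg.cons_cons (hab : a.2 = b.2) (h : ExcessNonneg g (a :: t)) :
    ExcessNonneg g (a :: b :: t) := by
  have hr : (labels (a :: b :: t)).card ≤ (labels (a :: t)).card + 1 := by
    rw [labels_cons, labels_cons, labels_cons, Finset.insert_comm]
    exact Finset.card_insert_le _ _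
  have := Nat.mul_le_mul_left (2 * g) hr
  simp only [ExcessNonneg, tupleUnion_cons, sizeSum_cons, List.length_cons, hab] at h this ⊢
  rw [← Finset.union_assoc, Finset.union_self]
  nlinarith [le_max_right b.2.card g]

theorem ExcessNonneg.cons_cons_of_eraseTuples (hab : a.2 = b.2) (har : a.1 = r.1)
    (h : ExcessNonneg g (eraseTuples a.2 (r :: t))) : ExcessNonneg g (a :: b :: r :: t) := by
  have hr : (labels (a :: b :: r :: t)).card ≤ (labels (eraseTuples a.2 (r :: t))).card + 1 := by
    rw [labels_eraseTuples]
    refine (Finset.card_le_card fun x hx => ?_).trans (Finset.card_insert_le b.1 _)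
    simp only [labels_cons, Finset.mem_insert, har] at hx ⊢
    tauto
  have hc : (tupleUnion (a :: b :: r :: t)).card
      ≤ (tupleUnion (eraseTuples a.2 (r :: t))).card + a.2.card := by
    refine (Finset.card_le_card ?_).trans (Finset.card_union_le _ _)
    rw [tupleUnion_cons, tupleUnion_cons, ← hab, ← Finset.union_assoc, Finset.union_self]
    exact Finset.union_subset Finset.subset_union_right (tupleUnion_subset_union_eraseTuples _ _)
  have hS := sizeSum_eraseTuples_le (g := g) a.2 (r :: t)
  have := Nat.mul_le_mul_left (2 * g) hr
  simp only [ExcessNonneg, sizeSum_cons, List.length_cons, eraseTuples, List.length_map,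
    ← hab] at h this hS hc ⊢
  nlinarith [le_max_left a.2.card g, le_max_right a.2.card g]

theorem IsMultiLabelling.excessNonneg (g : ℕ) (h : IsMultiLabelling l) : ExcessNonneg g l := by
  induction hL : l.length using Nat.strong_induction_on generalizing l with
  | _ L ih =>
  by_cases hl : ∀ x ∈ l.map Prod.fst, 2 ≤ (l.map Prod.fst).count x
  · exact h.excessNonneg_of_forall_two_le_count hl
  push Not at hl
  obtain ⟨_, hx, hcount⟩ := hl
  obtain ⟨e, he, rfl⟩ := List.mem_map.mp hx
  obtain ⟨k, a, t, hk⟩ :=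
    List.exists_rotate_eq_cons_cons he (h.two_le_length (List.ne_nil_of_mem he))
  have h' := hk ▸ h.rotate k
  have hlen : t.length + 2 = L := by rw [← hL, ← List.length_rotate l k, hk]; simp
  have hb : e.1 ∉ labels (a :: t) := by
    have hc : ((a :: e :: t).map Prod.fst).count e.1 < 2 := by
      rwa [← hk, List.map_rotate, (List.rotate_perm _ k).count_eq]
    rw [labels, List.mem_toFinset, ← List.count_pos_iff]
    simp only [List.map_cons, List.count_cons_self, List.count_cons] at hc ⊢
    omega
  have hab := h'.snd_eq hb
  rw [← excessNonneg_rotate_iff k, hk]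
  match t, h', hb, hab with
  | [], _, _, hab => exact excessNonneg_pair hab
  | r :: t, h', hb, hab =>
    by_cases har : a.1 = r.1
    · exact .cons_cons_of_eraseTuples hab har
        (ih _ (by simp [eraseTuples] at hlen ⊢; omega) (h'.eraseTuples_of_cons_cons hab har) rfl)
    · exact .cons_cons hab (ih _ (by simp at hlen ⊢; omega) (h'.cons_of_cons_cons hb har) rfl)

theorem tupleUnion_ofFn {L : ℕ} (nlabel : Fin L → α) (ptuple : Fin L → Finset β) :
    tupleUnion (List.ofFn fun s => (nlabel s, ptuple s)) = Finset.univ.biUnion ptuple := by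
  ext; simp [tupleUnion]

theorem incidence_ofFn {L n p : ℕ} [NeZero L] (nlabel : Fin L → Fin n)
    (ptuple : Fin L → Finset (Fin p)) (i : Fin n) (j : Fin p) :
    incidence i j (List.ofFn fun s => (nlabel s, ptuple s)) = incCount L n p nlabel ptuple i j := by
  rw [incidence, pVertices_ofFn]
  simp only [List.ofFn_eq_map, List.countP_map, Function.comp_def,
    List.countP_finRange, incCount]

theorem isMultiLabelling_ofFn {L n p : ℕ} [NeZero L] (nlabel : Fin L → Fin n)
    (ptuple : Fin L → Finset (Fin p)) (hadj : ∀ s : Fin L, nlabel s ≠ nlabel (s + 1))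
    (hpair : ∀ i j, incCount L n p nlabel ptuple i j = 0 ∨ 2 ≤ incCount L n p nlabel ptuple i j) :
    IsMultiLabelling (List.ofFn fun s => (nlabel s, ptuple s)) where
  fst_ne v hv := by
    rw [pVertices_ofFn, List.mem_ofFn] at hv
    obtain ⟨s, rfl⟩ := hv
    exact hadj s
  incidence_ne_one i j := by
    rw [incidence_ofFn]
    have := hpair i j
    omega

end CyclicLabelling

open CyclicLabelling in
theorem excess_nonneg_general (L n p ℓ L₁ : ℕ) [NeZero L] (hℓ : 1 ≤ ℓ)
    (nlabel : Fin L → Fin n) (ptuple : Fin L → Finset (Fin p))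
    (hsize : ∀ s : Fin L, ℓ ≤ (ptuple s).card ∧ (ptuple s).card ≤ L₁)
    (hadj : ∀ s : Fin L, nlabel s ≠ nlabel (s + 1))
    (hpair : ∀ (i : Fin n) (j : Fin p),
      incCount L n p nlabel ptuple i j = 0 ∨ 2 ≤ incCount L n p nlabel ptuple i j) :
    0 ≤ 1 + (L : ℝ) / 2 + (∑ s : Fin L, ((ptuple s).card : ℝ)) / (2 * ℓ)
        - ((Finset.univ.image nlabel).card : ℝ)
        - ((Finset.univ.biUnion ptuple).card : ℝ) / ℓ := by
  have key := (isMultiLabelling_ofFn nlabel ptuple hadj hpair).excessNonneg ℓ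
  rw [ExcessNonneg, labels_ofFn, tupleUnion_ofFn, sizeSum_ofFn, List.length_ofFn,
    Finset.sum_congr rfl fun s _ => max_eq_left (hsize s).1] at key
  have hℓ' : (0 : ℝ) < ℓ := by exact_mod_cast hℓ
  have key' : (2 * ℓ * (Finset.univ.image nlabel).card + 2 * (Finset.univ.biUnion ptuple).card : ℝ)
      ≤ ∑ s, ((ptuple s).card : ℝ) + ℓ * (L + 2) := by exact_mod_cast key
  calc (0 : ℝ)
      ≤ (∑ s, ((ptuple s).card : ℝ) + ℓ * (L + 2) - 2 * ℓ * (Finset.univ.image nlabel).card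
          - 2 * (Finset.univ.biUnion ptuple).card) / (2 * ℓ) :=
        div_nonneg (by linarith) (by positivity)
    _ = _ := by field_simp; ring

/-- Nonnegativity of the excess
`Δ = 1 + L/2 + (∑ d_s)/(2ℓ) − r − c/ℓ` of a `(p,n,L₁)`-multi-labelling of an `L`-graph. -/
theorem excess_nonneg (L n p ℓ L₁ : ℕ) [NeZero L] (hL : 2 ≤ L) (hℓ : 1 ≤ ℓ)
    (nlabel : Fin L → Fin n) (ptuple : Fin L → Finset (Fin p))
    (hsize : ∀ s : Fin L, ℓ ≤ (ptuple s).card ∧ (ptuple s).card ≤ L₁)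
    (hadj : ∀ s : Fin L, nlabel s ≠ nlabel (s + 1))
    (hpair : ∀ (i : Fin n) (j : Fin p),
      incCount L n p nlabel ptuple i j = 0 ∨ 2 ≤ incCount L n p nlabel ptuple i j) :
    0 ≤ 1 + (L : ℝ) / 2 + (∑ s : Fin L, ((ptuple s).card : ℝ)) / (2 * ℓ)
        - ((Finset.univ.image nlabel).card : ℝ)
        - ((Finset.univ.biUnion ptuple).card : ℝ) / ℓ :=
  excess_nonneg_general L n p ℓ L₁ hℓ nlabel ptuple hsize hadj hpair
end

section
/- Consider an L-graph with a (p,n,d)-non-backtracking multi-labelling: each n-vertex has a label in [n], each p-vertex a tuple of d distinct labels in [p] (d ≤ ℓ), adjacent n-vertices have distinct labels, adjacent p-vertices have tuples that are not equal as sets, and for each (n-label, p-label) pair the number of incident sub-edges is even. Let r̃ be the number of distinct n-labels and c̃ the number of distinct p-labels. Then r̃ + c̃/ℓ ≤ L/2 + dL/(2ℓ). -/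
/-!
Both bounds come from one observation: every label that occurs, occurs at least twice.
If an `n`-label `i` sat on a single `n`-vertex `s₀`, its two edges would lead to the `p`-vertices
with the distinct tuples `ptuple (s₀ - 1)` and `ptuple s₀`, and a `j` in exactly one of them
would give `incCount i j = 1`. If a `p`-label `j` sat in a single tuple, the two `n`-neighbours
of that `p`-vertex carry distinct labels, so `incCount i j = 1` for the label `i` of either one.
Counting the `L` `n`-vertices and the `d * L` label slots of the tuples then gives `2 r̃ ≤ L`
and `2 c̃ ≤ d L`.
-/

open Finset

theorem forall_iff_eq_of_card_filter_le_one {α : Type*} [Fintype α] {P : α → Prop}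
    [DecidablePred P] (h : #{x | P x} ≤ 1) {a : α} (ha : P a) : ∀ x, P x ↔ x = a :=
  fun x ↦ ⟨fun hx ↦ card_le_one.mp h x (by simpa using hx) a (by simpa using ha),
    fun hx ↦ hx ▸ ha⟩

theorem card_filter_and_eq_ite {α : Type*} [Fintype α] {P Q : α → Prop}
    [DecidablePred P] [DecidablePred Q] {a : α} (hQ : ∀ x, Q x ↔ x = a) :
    #{x | P x ∧ Q x} = if P a then 1 else 0 := by
  split_ifs with h
  · refine card_eq_one.mpr ⟨a, ext fun x ↦ ?_⟩
    simp only [mem_filter, mem_univ, true_and, hQ, mem_singleton]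
    exact ⟨And.right, fun hx ↦ ⟨hx ▸ h, hx⟩⟩
  · exact card_eq_zero.mpr <| filter_eq_empty_iff.mpr fun x _ ⟨hp, hq⟩ ↦ h ((hQ x).1 hq ▸ hp)

section
variable {L n p : ℕ} [NeZero L] {nlabel : Fin L → Fin n} {ptuple : Fin L → Finset (Fin p)}

theorem incCount_eq_of_nlabel_fiber {s₀ : Fin L} {i : Fin n}
    (h : ∀ s, nlabel s = i ↔ s = s₀) (j : Fin p) :
    incCount L n p nlabel ptuple i j =
      (if j ∈ ptuple s₀ then 1 else 0) + (if j ∈ ptuple (s₀ - 1) then 1 else 0) := by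
  have h' : ∀ s, nlabel (s + 1) = i ↔ s = s₀ - 1 := fun s ↦ by rw [h, eq_sub_iff_add_eq]
  rw [incCount, card_filter_and_eq_ite h, card_filter_and_eq_ite h']

theorem incCount_eq_one_of_ptuple_fiber (hadjn : ∀ s : Fin L, nlabel s ≠ nlabel (s + 1))
    {s₀ : Fin L} {j : Fin p} (h : ∀ s, j ∈ ptuple s ↔ s = s₀) :
    incCount L n p nlabel ptuple (nlabel s₀) j = 1 := by
  simp only [incCount, and_comm (a := j ∈ _)]
  rw [card_filter_and_eq_ite h, card_filter_and_eq_ite h, if_pos rfl, if_neg (hadjn s₀).symm]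

theorem two_le_card_filter_nlabel_eq (hadjp : ∀ s : Fin L, ptuple s ≠ ptuple (s + 1))
    (heven : ∀ i j, Even (incCount L n p nlabel ptuple i j)) (s₀ : Fin L) :
    2 ≤ #{s | nlabel s = nlabel s₀} := by
  by_contra! hlt
  have hfiber := forall_iff_eq_of_card_filter_le_one (Nat.le_of_lt_succ hlt) rfl
  refine hadjp (s₀ - 1) ?_
  ext j
  have hj := heven (nlabel s₀) j
  rw [incCount_eq_of_nlabel_fiber hfiber] at hj
  rw [sub_add_cancel]
  refine (not_iff_not.mp ?_).symm
  simpa [Nat.even_add, apply_ite Even] using hj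

theorem two_le_card_filter_mem_ptuple (hadjn : ∀ s : Fin L, nlabel s ≠ nlabel (s + 1))
    (heven : ∀ i j, Even (incCount L n p nlabel ptuple i j)) {s₀ : Fin L} {j : Fin p}
    (hj : j ∈ ptuple s₀) : 2 ≤ #{s | j ∈ ptuple s} := by
  by_contra! hlt
  have hodd := heven (nlabel s₀) j
  rw [incCount_eq_one_of_ptuple_fiber hadjn
    (forall_iff_eq_of_card_filter_le_one (Nat.le_of_lt_succ hlt) hj)] at hodd
  exact Nat.not_even_one hodd

end

theorem two_mul_card_image_le {α β : Type*} [Fintype α] [DecidableEq β] (f : α → β)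
    (h : ∀ a, 2 ≤ #{x | f x = f a}) : 2 * #(univ.image f) ≤ Fintype.card α :=
  mul_card_image_le_card univ 2 fun b hb ↦ by
    obtain ⟨a, -, rfl⟩ := mem_image.mp hb
    exact h a

theorem two_mul_card_biUnion_le {ι α : Type*} [Fintype ι] [DecidableEq α] (t : ι → Finset α)
    {d : ℕ} (hsize : ∀ i, #(t i) = d) (h : ∀ i, ∀ a ∈ t i, 2 ≤ #{x | a ∈ t x}) :
    #(univ.biUnion t) * 2 ≤ Fintype.card ι * d := by
  refine card_mul_le_card_mul' (fun i a ↦ a ∈ t i) (fun a ha ↦ ?_) fun i _ ↦ ?_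
  · obtain ⟨i, -, hi⟩ := mem_biUnion.mp ha
    exact h i a hi
  · exact (card_le_card fun a ha ↦ (mem_filter.mp ha).2).trans (hsize i).le

theorem nonbacktracking_label_bound_general (L n p ℓ d : ℕ) [NeZero L]
    (nlabel : Fin L → Fin n) (ptuple : Fin L → Finset (Fin p))
    (hsize : ∀ s : Fin L, (ptuple s).card = d)
    (hadjn : ∀ s : Fin L, nlabel s ≠ nlabel (s + 1))
    (hadjp : ∀ s : Fin L, ptuple s ≠ ptuple (s + 1))
    (heven : ∀ (i : Fin n) (j : Fin p), Even (incCount L n p nlabel ptuple i j)) :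
    ((Finset.univ.image nlabel).card : ℝ) + ((Finset.univ.biUnion ptuple).card : ℝ) / ℓ ≤
      (L : ℝ) / 2 + (d : ℝ) * L / (2 * ℓ) := by
  have hr : 2 * #(univ.image nlabel) ≤ L := by
    simpa using two_mul_card_image_le nlabel (two_le_card_filter_nlabel_eq hadjp heven)
  have hc : #(univ.biUnion ptuple) * 2 ≤ L * d := by
    simpa using two_mul_card_biUnion_le ptuple hsize fun _ _ ↦
      two_le_card_filter_mem_ptuple hadjn heven
  have hrR : (#(univ.image nlabel) : ℝ) ≤ L / 2 := by
    rw [le_div_iff₀ two_pos]; exact_mod_cast hr.trans_eq' (mul_comm _ _)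
  have hcR : (#(univ.biUnion ptuple) : ℝ) / ℓ ≤ d * L / (2 * ℓ) := by
    rw [← div_div]
    gcongr
    rw [le_div_iff₀ two_pos]; exact_mod_cast hc.trans_eq (mul_comm _ _)
  linarith

/-- For a `(p,n,d)`-non-backtracking multi-labelling of an `L`-graph with `r̃` distinct
`n`-labels and `c̃` distinct `p`-labels, `r̃ + c̃/ℓ ≤ L/2 + dL/(2ℓ)`. -/
theorem nonbacktracking_label_bound (L n p ℓ d : ℕ) [NeZero L]
    (hd : 1 ≤ d) (hdℓ : d ≤ ℓ)
    (nlabel : Fin L → Fin n) (ptuple : Fin L → Finset (Fin p))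
    (hsize : ∀ s : Fin L, (ptuple s).card = d)
    (hadjn : ∀ s : Fin L, nlabel s ≠ nlabel (s + 1))
    (hadjp : ∀ s : Fin L, ptuple s ≠ ptuple (s + 1))
    (heven : ∀ (i : Fin n) (j : Fin p), Even (incCount L n p nlabel ptuple i j)) :
    ((Finset.univ.image nlabel).card : ℝ) + ((Finset.univ.biUnion ptuple).card : ℝ) / ℓ ≤
      (L : ℝ) / 2 + (d : ℝ) * L / (2 * ℓ) :=
  nonbacktracking_label_bound_general L n p ℓ d nlabel ptuple hsize hadjn hadjp heven
end

section
/- Consider a (p,n,d)-non-backtracking multi-labelling of an L-graph with excess Δ := 1 + L/2 + dL/(2ℓ) − r̃ − c̃/ℓ, where r̃ is the number of distinct n-labels and c̃ the number of distinct p-labels. Let N_j^r denote the number of n-vertices labelled j and N_j^c the number of appearances of j among all p-vertex tuples. Then ∑_{j : N_j^c ≥ 3} N_j^c + ∑_{j : N_j^r ≥ 3} N_j^r ≤ 12·Δ·ℓ. -/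
open Finset


lemma count_aux {α : Type*} [Fintype α] (N : α → ℕ)
    (hmin : ∀ a, N a ≠ 0 → 2 ≤ N a) :
    (∑ a ∈ Finset.univ.filter (fun a => 3 ≤ N a), N a)
      + 6 * (Finset.univ.filter (fun a => N a ≠ 0)).card ≤ 3 * ∑ a, N a ∧
    2 * (Finset.univ.filter (fun a => N a ≠ 0)).card ≤ ∑ a, N a := by
  classical
  set A := Finset.univ.filter (fun a => N a ≠ 0) with hA
  set T := Finset.univ.filter (fun a => 3 ≤ N a) with hT
  have hTA : T ⊆ A := by
    intro a ha
    simp only [hA, hT, mem_filter, mem_univ, true_and] at *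
    omega
  have hsum : ∑ a ∈ A, N a = ∑ a, N a := by
    rw [hA]; exact Finset.sum_filter_ne_zero _
  have hsplit : ∑ a ∈ A \ T, N a + ∑ a ∈ T, N a = ∑ a ∈ A, N a :=
    Finset.sum_sdiff hTA
  have h2 : ∑ a ∈ A \ T, N a = (A \ T).card * 2 := by
    refine Finset.sum_const_nat (fun a ha => ?_)
    simp only [hA, hT, mem_sdiff, mem_filter, mem_univ, true_and] at ha
    have := hmin a ha.1
    omega
  have h3 : 3 * T.card ≤ ∑ a ∈ T, N a := by
    calc 3 * T.card = ∑ _a ∈ T, 3 := by rw [Finset.sum_const, smul_eq_mul, mul_comm]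
    _ ≤ ∑ a ∈ T, N a := Finset.sum_le_sum (fun a ha => by
        simp only [hT, mem_filter] at ha; exact ha.2)
  have hcard : (A \ T).card + T.card = A.card := Finset.card_sdiff_add_card_eq_card hTA
  omega


/-- In a `(p,n,d)`-non-backtracking multi-labelling of an `L`-graph with excess
`Δ = 1 + L/2 + dL/(2ℓ) − r̃ − c̃/ℓ`, the total number of appearances of labels
appearing at least three times is at most `12Δℓ`. -/
theorem triple_label_count_bound (L n p ℓ d : ℕ) [NeZero L]
    (hd : 1 ≤ d) (hdℓ : d ≤ ℓ)
    (nlabel : Fin L → Fin n) (ptuple : Fin L → Finset (Fin p))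
    (hsize : ∀ s : Fin L, (ptuple s).card = d)
    (hadjn : ∀ s : Fin L, nlabel s ≠ nlabel (s + 1))
    (hadjp : ∀ s : Fin L, ptuple s ≠ ptuple (s + 1))
    (heven : ∀ (i : Fin n) (j : Fin p), Even (incCount L n p nlabel ptuple i j))
    (Nc : Fin p → ℕ) (hNc : ∀ j, Nc j = (Finset.univ.filter fun s : Fin L => j ∈ ptuple s).card)
    (Nr : Fin n → ℕ) (hNr : ∀ i, Nr i = (Finset.univ.filter fun s : Fin L => nlabel s = i).card)
    (Δ : ℝ)
    (hΔ : Δ = 1 + (L : ℝ) / 2 + (d : ℝ) * L / (2 * ℓ)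
        - ((Finset.univ.image nlabel).card : ℝ)
        - ((Finset.univ.biUnion ptuple).card : ℝ) / ℓ) :
    (∑ j ∈ Finset.univ.filter (fun j : Fin p => 3 ≤ Nc j), (Nc j : ℝ)) +
      (∑ i ∈ Finset.univ.filter (fun i : Fin n => 3 ≤ Nr i), (Nr i : ℝ)) ≤
        12 * Δ * ℓ := by
  classical
  have hℓ1 : 1 ≤ ℓ := le_trans hd hdℓ
  -- total number of n-label appearances is L
  have hLsum : ∑ i, Nr i = L := by
    simp only [hNr]
    rw [← Finset.card_eq_sum_card_fiberwise (f := nlabel) (fun s _ => Finset.mem_univ _)]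
    simp
  -- total number of p-label appearances is L * d
  have hCsum : ∑ j, Nc j = L * d := by
    simp only [hNc, Finset.card_filter]
    rw [Finset.sum_comm]
    have hrow : ∀ s : Fin L, (∑ j : Fin p, if j ∈ ptuple s then 1 else 0) = d := by
      intro s
      rw [← Finset.card_filter, Finset.filter_univ_mem, hsize]
    simp [hrow]
  -- every appearing n-label appears at least twice
  have hminr : ∀ i, Nr i ≠ 0 → 2 ≤ Nr i := by
    intro i hi
    by_contra hlt
    have h1 : (Finset.univ.filter fun s : Fin L => nlabel s = i).card = 1 := by
      rw [hNr] at hi hlt; omega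
    obtain ⟨t, ht⟩ := Finset.card_eq_one.mp h1
    have hmem : ∀ s : Fin L, nlabel s = i ↔ s = t := by
      intro s
      have h := Finset.ext_iff.mp ht s
      simpa using h
    have hsub : ptuple t ⊆ ptuple (t - 1) := by
      intro j hj
      have hev := heven i j
      rw [incCount] at hev
      have hF1 : (Finset.univ.filter fun s : Fin L => j ∈ ptuple s ∧ nlabel s = i) = {t} := by
        ext s
        simp only [Finset.mem_filter, Finset.mem_univ, true_and, Finset.mem_singleton, hmem]
        constructor
        · exact fun h => h.2
        · rintro rfl; exact ⟨hj, rfl⟩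
      rw [hF1, Finset.card_singleton] at hev
      obtain ⟨k, hk⟩ := hev
      have hpos : 0 < (Finset.univ.filter fun s : Fin L => j ∈ ptuple s ∧ nlabel (s + 1) = i).card := by
        omega
      obtain ⟨s, hs⟩ := Finset.card_pos.mp hpos
      simp only [Finset.mem_filter, Finset.mem_univ, true_and] at hs
      have hst : s = t - 1 := eq_sub_of_add_eq ((hmem (s + 1)).mp hs.2)
      rw [← hst]; exact hs.1
    have heq : ptuple t = ptuple (t - 1) :=
      Finset.eq_of_subset_of_card_le hsub (by rw [hsize, hsize])
    exact hadjp (t - 1) (by rw [sub_add_cancel]; exact heq.symm)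
  -- every appearing p-label appears at least twice
  have hminc : ∀ j, Nc j ≠ 0 → 2 ≤ Nc j := by
    intro j hj
    by_contra hlt
    have h1 : (Finset.univ.filter fun s : Fin L => j ∈ ptuple s).card = 1 := by
      rw [hNc] at hj hlt; omega
    obtain ⟨t, ht⟩ := Finset.card_eq_one.mp h1
    have hmem : ∀ s : Fin L, j ∈ ptuple s ↔ s = t := by
      intro s
      have h := Finset.ext_iff.mp ht s
      simpa using h
    have hev := heven (nlabel t) j
    rw [incCount] at hev
    have hF1 : (Finset.univ.filter fun s : Fin L => j ∈ ptuple s ∧ nlabel s = nlabel t) = {t} := by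
      ext s
      simp only [Finset.mem_filter, Finset.mem_univ, true_and, Finset.mem_singleton]
      constructor
      · exact fun h => (hmem s).mp h.1
      · rintro rfl; exact ⟨(hmem _).mpr rfl, rfl⟩
    have hF2 : (Finset.univ.filter fun s : Fin L => j ∈ ptuple s ∧ nlabel (s + 1) = nlabel t) = ∅ := by
      ext s
      simp only [Finset.mem_filter, Finset.mem_univ, true_and, Finset.notMem_empty, iff_false,
        not_and]
      intro h1 h2
      rw [(hmem s).mp h1] at h2
      exact hadjn t h2.symm
    rw [hF1, hF2] at hev
    simp at hev
  -- identify the number of distinct labels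
  have hNrne : ∀ i, Nr i ≠ 0 ↔ ∃ s, nlabel s = i := by
    intro i
    rw [hNr]
    constructor
    · intro h
      obtain ⟨s, hs⟩ := Finset.card_pos.mp (Nat.pos_of_ne_zero h)
      exact ⟨s, (Finset.mem_filter.mp hs).2⟩
    · rintro ⟨s, hs⟩
      exact Finset.card_ne_zero_of_mem (Finset.mem_filter.mpr ⟨Finset.mem_univ s, hs⟩)
  have hNcne : ∀ j, Nc j ≠ 0 ↔ ∃ s, j ∈ ptuple s := by
    intro j
    rw [hNc]
    constructor
    · intro h
      obtain ⟨s, hs⟩ := Finset.card_pos.mp (Nat.pos_of_ne_zero h)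
      exact ⟨s, (Finset.mem_filter.mp hs).2⟩
    · rintro ⟨s, hs⟩
      exact Finset.card_ne_zero_of_mem (Finset.mem_filter.mpr ⟨Finset.mem_univ s, hs⟩)
  have himg : Finset.univ.image nlabel = Finset.univ.filter (fun i => Nr i ≠ 0) := by
    ext i
    simp [Finset.mem_image, Finset.mem_filter, hNrne]
  have hbi : Finset.univ.biUnion ptuple = Finset.univ.filter (fun j => Nc j ≠ 0) := by
    ext j
    simp [Finset.mem_biUnion, Finset.mem_filter, hNcne]
  obtain ⟨hr1, hr2⟩ := count_aux Nr hminr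
  obtain ⟨hc1, hc2⟩ := count_aux Nc hminc
  rw [hLsum] at hr1 hr2
  rw [hCsum] at hc1 hc2
  rw [himg, hbi] at hΔ
  set Sr : ℕ := ∑ i ∈ Finset.univ.filter (fun i : Fin n => 3 ≤ Nr i), Nr i with hSr
  set Sc : ℕ := ∑ j ∈ Finset.univ.filter (fun j : Fin p => 3 ≤ Nc j), Nc j with hSc
  set r : ℕ := (Finset.univ.filter (fun i => Nr i ≠ 0)).card with hrdef
  set c : ℕ := (Finset.univ.filter (fun j => Nc j ≠ 0)).card with hcdef
  have hcastc : (∑ j ∈ Finset.univ.filter (fun j : Fin p => 3 ≤ Nc j), (Nc j : ℝ)) = (Sc : ℝ) := by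
    rw [hSc]; push_cast; ring
  have hcastr : (∑ i ∈ Finset.univ.filter (fun i : Fin n => 3 ≤ Nr i), (Nr i : ℝ)) = (Sr : ℝ) := by
    rw [hSr]; push_cast; ring
  rw [hcastc, hcastr, hΔ]
  have hℓR : (1 : ℝ) ≤ ℓ := by exact_mod_cast hℓ1
  have hℓ0 : (0 : ℝ) < ℓ := by linarith
  have A1 : (Sr : ℝ) + 6 * r ≤ 3 * L := by exact_mod_cast hr1
  have A2 : 2 * (r : ℝ) ≤ L := by exact_mod_cast hr2
  have B1 : (Sc : ℝ) + 6 * c ≤ 3 * ((L : ℝ) * d) := by exact_mod_cast hc1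
  have B2 : 2 * (c : ℝ) ≤ (L : ℝ) * d := by exact_mod_cast hc2
  have hval : 12 * (1 + (L : ℝ) / 2 + (d : ℝ) * L / (2 * ℓ) - (r : ℝ) - (c : ℝ) / ℓ) * ℓ
      = 12 * ℓ + 6 * L * ℓ + 6 * ((L : ℝ) * d) - 12 * r * ℓ - 12 * c := by
    field_simp
    ring
  rw [hval]
  nlinarith [mul_nonneg (by linarith : (0 : ℝ) ≤ 2 * ℓ - 1)
    (by linarith : (0 : ℝ) ≤ (L : ℝ) - 2 * r)]
end
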